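/- arXiv:math/9905192 — 5 statements merged into one kernel-verified Lean document; each statement's English description precedes it below -/
import Mathlib

section
/- Let H be a bialgebroid over a base algebra R (with source map α an algebra homomorphism, target map β an algebra anti-homomorphism whose images commute, coproduct Δ : H → H ⊗_R H). Then the compatibility conditions (a) Δ(h)(β(a)⊗1 − 1⊗α(a)) = 0 in H ⊗_R H for all a ∈ R, h ∈ H, and (b) Δ(h₁h₂) = Δ(h₁)Δ(h₂), hold if and only if the kernel of the map Ψ : H ⊗ H ⊗ H → H ⊗_R H defined by Ψ(h₁ ⊗ h₂ ⊗ h₃) = Δ(h₁)(h₂ ⊗ h₃) is a left ideal of H ⊗ H^op ⊗ H^op. -/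
open TensorProduct

noncomputable section

variable (k : Type) {H R : Type} [CommRing k] [Ring H] [Algebra k H] [Ring R] [Algebra k R]

/-- The relation submodule defining the `(R,R)`-bimodule tensor product `H ⊗_R H`,
where the right `R`-action on `H` is `h · a = bf a * h` and the left action is
`a · h = af a * h`.  Generators: `(bf a * x) ⊗ y - x ⊗ (af a * y)`. -/
def relQ (af bf : R → H) : Submodule k (H ⊗[k] H) :=
  Submodule.span k {z | ∃ (a : R) (x y : H), z = (bf a * x) ⊗ₜ[k] y - x ⊗ₜ[k] (af a * y)}

/-- `H ⊗_R H` as a quotient of `H ⊗[k] H`. -/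
abbrev HtQ (af bf : R → H) : Type _ := (H ⊗[k] H) ⧸ relQ k af bf

/-- The canonical projection `H ⊗[k] H → H ⊗_R H`. -/
def prQ (af bf : R → H) : H ⊗[k] H →ₗ[k] HtQ k af bf := (relQ k af bf).mkQ

lemma relQ_mul_right (af bf : R → H) {w : H ⊗[k] H} (hw : w ∈ relQ k af bf)
    (u : H ⊗[k] H) : w * u ∈ relQ k af bf := by
  induction hw using Submodule.span_induction with
  | mem z hz =>
      obtain ⟨a, x, y, rfl⟩ := hz
      induction u using TensorProduct.induction_on with
      | zero => simpa using (relQ k af bf).zero_mem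
      | tmul p q =>
          rw [sub_mul, Algebra.TensorProduct.tmul_mul_tmul,
            Algebra.TensorProduct.tmul_mul_tmul]
          exact Submodule.subset_span ⟨a, x * p, y * q, by rw [mul_assoc, mul_assoc]⟩
      | add u v hu hv => rw [mul_add]; exact add_mem hu hv
  | zero => simpa using (relQ k af bf).zero_mem
  | add u v _ _ hu hv => rw [add_mul]; exact add_mem hu hv
  | smul c u _ hu => rw [smul_mul_assoc]; exact Submodule.smul_mem _ c hu

/-- Right multiplication by `u ∈ H ⊗ H` descends to `H ⊗_R H`. -/
def mulRightQ (af bf : R → H) (u : H ⊗[k] H) : HtQ k af bf →ₗ[k] HtQ k af bf :=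
  Submodule.mapQ _ _ (LinearMap.mulRight k u)
    (fun w hw => by simpa using relQ_mul_right k af bf hw u)

lemma mulRightQ_mk (af bf : R → H) (u w : H ⊗[k] H) :
    mulRightQ k af bf u (prQ k af bf w) = prQ k af bf (w * u) := by
  simp [mulRightQ, prQ, Submodule.mapQ_apply]

/-- `u ↦ (right multiplication by `u` on `H ⊗_R H`)`, as a linear map. -/
def mulRightQL (af bf : R → H) :
    (H ⊗[k] H) →ₗ[k] (HtQ k af bf →ₗ[k] HtQ k af bf) where
  toFun := mulRightQ k af bf
  map_add' u v := by
    apply LinearMap.ext; intro x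
    obtain ⟨w, rfl⟩ := (relQ k af bf).mkQ_surjective x
    show mulRightQ k af bf (u + v) (prQ k af bf w)
        = mulRightQ k af bf u (prQ k af bf w) + mulRightQ k af bf v (prQ k af bf w)
    rw [mulRightQ_mk, mulRightQ_mk, mulRightQ_mk, mul_add, map_add]
  map_smul' c u := by
    apply LinearMap.ext; intro x
    obtain ⟨w, rfl⟩ := (relQ k af bf).mkQ_surjective x
    show mulRightQ k af bf (c • u) (prQ k af bf w) = c • mulRightQ k af bf u (prQ k af bf w)
    rw [mulRightQ_mk, mulRightQ_mk, mul_smul_comm, map_smul]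

/-- The map `Ψ : H ⊗ (H ⊗ H) → H ⊗_R H`, `h₁ ⊗ h₂ ⊗ h₃ ↦ Δ(h₁)(h₂ ⊗ h₃)`,
associated to a "coproduct" `D : H → H ⊗_R H`. -/
def PsiQ (af bf : R → H) (D : H →ₗ[k] HtQ k af bf) :
    H ⊗[k] (H ⊗[k] H) →ₗ[k] HtQ k af bf :=
  TensorProduct.lift ((mulRightQL k af bf).flip ∘ₗ D)

/-- The action of `x ⊗ y ⊗ w ∈ H ⊗ H^op ⊗ H^op` on `H ⊗ H ⊗ H`. -/
def Lact (x y w : H) : H ⊗[k] (H ⊗[k] H) →ₗ[k] H ⊗[k] (H ⊗[k] H) :=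
  TensorProduct.map (LinearMap.mulLeft k x)
    (TensorProduct.map (LinearMap.mulRight k y) (LinearMap.mulRight k w))

/-- The target map `β`, as a `k`-linear map `R →ₗ H`. -/
def unopL (β : R →ₐ[k] Hᵐᵒᵖ) : R →ₗ[k] H :=
  (MulOpposite.opLinearEquiv k).symm.toLinearMap ∘ₗ β.toLinearMap

/-- `φ_α`-type map: `φ (x ⊗ y) a = s (μ(x) a) * y`. -/
def phiAL (μ : H →ₐ[k] Module.End k R) (s : R →ₗ[k] H) :
    (H ⊗[k] H) →ₗ[k] R →ₗ[k] H :=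
  TensorProduct.lift (LinearMap.mk₂ k
    (fun x y => LinearMap.mulRight k y ∘ₗ s ∘ₗ (μ x : R →ₗ[k] R))
    (by intro x₁ x₂ y; apply LinearMap.ext; intro a
        simp [map_add, add_mul])
    (by intro c x y; apply LinearMap.ext; intro a
        simp [map_smul, smul_mul_assoc])
    (by intro x y₁ y₂; apply LinearMap.ext; intro a
        simp [mul_add])
    (by intro c x y; apply LinearMap.ext; intro a
        simp [mul_smul_comm]))

/-- `φ_β`-type map: `φ (x ⊗ y) a = s (μ(y) a) * x`. -/
def phiBL (μ : H →ₐ[k] Module.End k R) (s : R →ₗ[k] H) :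
    (H ⊗[k] H) →ₗ[k] R →ₗ[k] H :=
  TensorProduct.lift (LinearMap.mk₂ k
    (fun x y => LinearMap.mulRight k x ∘ₗ s ∘ₗ (μ y : R →ₗ[k] R))
    (by intro x₁ x₂ y; apply LinearMap.ext; intro a
        simp [mul_add])
    (by intro c x y; apply LinearMap.ext; intro a
        simp [mul_smul_comm])
    (by intro x y₁ y₂; apply LinearMap.ext; intro a
        simp [map_add, add_mul])
    (by intro c x y; apply LinearMap.ext; intro a
        simp [map_smul, smul_mul_assoc]))

/-- Evaluation of an element of `H ⊗ H` on a pair of elements of `R` through the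
anchor: `(x ⊗ y)(a, b) = μ(x)(a) * μ(y)(b)`. -/
def ev2 (μ : H →ₐ[k] Module.End k R) :
    (H ⊗[k] H) →ₗ[k] R →ₗ[k] R →ₗ[k] R :=
  TensorProduct.lift (LinearMap.mk₂ k
    (fun x y => (LinearMap.mul k R).compl₁₂ (μ x : R →ₗ[k] R) (μ y : R →ₗ[k] R))
    (by intro x₁ x₂ y; apply LinearMap.ext; intro a; apply LinearMap.ext; intro b
        simp [map_add, add_mul])
    (by intro c x y; apply LinearMap.ext; intro a; apply LinearMap.ext; intro b
        simp [map_smul, smul_mul_assoc])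
    (by intro x y₁ y₂; apply LinearMap.ext; intro a; apply LinearMap.ext; intro b
        simp [map_add, mul_add])
    (by intro c x y; apply LinearMap.ext; intro a; apply LinearMap.ext; intro b
        simp [map_smul, mul_smul_comm]))

/-- `(ε ⊗_R id)`-type counit evaluation: `x ⊗ y ↦ s(ε x) * y`. -/
def e1 (s : R →ₗ[k] H) (ε : H →ₗ[k] R) : (H ⊗[k] H) →ₗ[k] H :=
  TensorProduct.lift (LinearMap.mk₂ k
    (fun x y => s (ε x) * y)
    (by intro x₁ x₂ y; simp [map_add, add_mul])
    (by intro c x y; simp [map_smul, smul_mul_assoc])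
    (by intro x y₁ y₂; simp [mul_add])
    (by intro c x y; simp [mul_smul_comm]))

/-- `(id ⊗_R ε)`-type counit evaluation: `x ⊗ y ↦ s(ε y) * x`. -/
def e2 (s : R →ₗ[k] H) (ε : H →ₗ[k] R) : (H ⊗[k] H) →ₗ[k] H :=
  TensorProduct.lift (LinearMap.mk₂ k
    (fun x y => s (ε y) * x)
    (by intro x₁ x₂ y; simp [mul_add])
    (by intro c x y; simp [mul_smul_comm])
    (by intro x y₁ y₂; simp [map_add, add_mul])
    (by intro c x y; simp [map_smul, smul_mul_assoc]))

/-- The relation submodule for the triple tensor product `H ⊗_R H ⊗_R H`. -/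
def relQ3 (af bf : R → H) : Submodule k ((H ⊗[k] H) ⊗[k] H) :=
  Submodule.span k
    ({w | ∃ (a : R) (x y z : H),
        w = ((bf a * x) ⊗ₜ[k] y) ⊗ₜ[k] z - (x ⊗ₜ[k] (af a * y)) ⊗ₜ[k] z} ∪
     {w | ∃ (a : R) (x y z : H),
        w = (x ⊗ₜ[k] (bf a * y)) ⊗ₜ[k] z - (x ⊗ₜ[k] y) ⊗ₜ[k] (af a * z)})

/-- `H ⊗_R H ⊗_R H`. -/
abbrev HtQ3 (af bf : R → H) : Type _ := ((H ⊗[k] H) ⊗[k] H) ⧸ relQ3 k af bf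

/-- Projection onto `H ⊗_R H ⊗_R H`. -/
def prQ3 (af bf : R → H) : (H ⊗[k] H) ⊗[k] H →ₗ[k] HtQ3 k af bf := (relQ3 k af bf).mkQ

variable {A : Type} [Ring A] [Algebra k A]

/-- Representative-level `(Δ ⊗ id)` map. -/
def DL (Δ' : H →ₗ[k] H ⊗[k] H) : H ⊗[k] H →ₗ[k] (H ⊗[k] H) ⊗[k] H :=
  TensorProduct.map Δ' LinearMap.id

/-- Representative-level `(id ⊗ Δ)` map (landing in the left-associated triple product). -/
def DR (Δ' : H →ₗ[k] H ⊗[k] H) : H ⊗[k] H →ₗ[k] (H ⊗[k] H) ⊗[k] H :=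
  (TensorProduct.assoc k H H H).symm.toLinearMap ∘ₗ TensorProduct.map LinearMap.id Δ'

/-- Reassociation `H ⊗ (H ⊗ H) → (H ⊗ H) ⊗ H`. -/
def aInv : H ⊗[k] (H ⊗[k] H) →ₗ[k] (H ⊗[k] H) ⊗[k] H :=
  (TensorProduct.assoc k H H H).symm.toLinearMap

/-- The cocycle identity `((Δ ⊗_R id)F)·F¹² = ((id ⊗_R Δ)F)·F²³` in `H ⊗_R H ⊗_R H`,
stated at the level of a representative `F'` and a representative lift `Δ'` of the
coproduct. -/
def IsCocycle (af bf : R → H) (Δ' : H →ₗ[k] H ⊗[k] H) (F' : H ⊗[k] H) : Prop :=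
  prQ3 k af bf (DL k Δ' F' * (F' ⊗ₜ[k] (1 : H)))
    = prQ3 k af bf (DR k Δ' F' * aInv k ((1 : H) ⊗ₜ[k] F'))

/-- The counit identities `(ε ⊗_R id)F = 1 = (id ⊗_R ε)F`. -/
def IsCounital (s t : R →ₗ[k] H) (ε : H →ₗ[k] R) (F' : H ⊗[k] H) : Prop :=
  e1 k s ε F' = 1 ∧ e2 k t ε F' = 1

end

noncomputable section

open TensorProduct

section Aux

variable (k : Type) {H R : Type} [CommRing k] [Ring H] [Algebra k H] [Ring R] [Algebra k R]

lemma map_mulRight_eq (y w : H) (u : H ⊗[k] H) :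
    TensorProduct.map (LinearMap.mulRight k y) (LinearMap.mulRight k w) u
      = u * (y ⊗ₜ[k] w) := by
  induction u using TensorProduct.induction_on with
  | zero => simp
  | tmul p q => simp [Algebra.TensorProduct.tmul_mul_tmul]
  | add u v hu hv => simp only [map_add, add_mul, hu, hv]

lemma prQ_eq_zero_iff (af bf : R → H) (w : H ⊗[k] H) :
    prQ k af bf w = 0 ↔ w ∈ relQ k af bf := by
  simp [prQ, Submodule.Quotient.mk_eq_zero]

lemma prQ_eq_iff (af bf : R → H) (w w' : H ⊗[k] H) :
    prQ k af bf w = prQ k af bf w' ↔ w - w' ∈ relQ k af bf := by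
  simp only [prQ, Submodule.mkQ_apply]
  exact Submodule.Quotient.eq _

lemma leftmul_rel (af bf : R → H) (d : H ⊗[k] H)
    (hd : ∀ a : R, d * ((bf a) ⊗ₜ[k] (1 : H) - (1 : H) ⊗ₜ[k] af a) ∈ relQ k af bf)
    {v : H ⊗[k] H} (hv : v ∈ relQ k af bf) : d * v ∈ relQ k af bf := by
  induction hv using Submodule.span_induction with
  | mem z hz =>
      obtain ⟨a, x, y, rfl⟩ := hz
      have hgen : (bf a * x) ⊗ₜ[k] y - x ⊗ₜ[k] (af a * y)
          = ((bf a) ⊗ₜ[k] (1 : H) - (1 : H) ⊗ₜ[k] af a) * (x ⊗ₜ[k] y) := by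
        simp [sub_mul, Algebra.TensorProduct.tmul_mul_tmul]
      rw [hgen, ← mul_assoc]
      exact relQ_mul_right k af bf (hd a) _
  | zero => simpa using (relQ k af bf).zero_mem
  | add u v _ _ hu hv => rw [mul_add]; exact add_mem hu hv
  | smul c u _ hu => rw [mul_smul_comm]; exact Submodule.smul_mem _ c hu

/-- The representative-level multiplication map `h ⊗ u ↦ Δ'(h) * u`. -/
def mulMap (Δ' : H →ₗ[k] H ⊗[k] H) : H ⊗[k] (H ⊗[k] H) →ₗ[k] H ⊗[k] H :=
  TensorProduct.lift ((LinearMap.mul k (H ⊗[k] H)) ∘ₗ Δ')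

@[simp] lemma mulMap_tmul (Δ' : H →ₗ[k] H ⊗[k] H) (h : H) (u : H ⊗[k] H) :
    mulMap k Δ' (h ⊗ₜ[k] u) = Δ' h * u := by
  simp [mulMap]

lemma PsiQ_tmul (af bf : R → H) (Δ' : H →ₗ[k] H ⊗[k] H) (h : H) (u : H ⊗[k] H) :
    PsiQ k af bf (prQ k af bf ∘ₗ Δ') (h ⊗ₜ[k] u) = prQ k af bf (Δ' h * u) := by
  simp only [PsiQ, TensorProduct.lift.tmul, LinearMap.coe_comp, Function.comp_apply,
    LinearMap.flip_apply]
  show mulRightQ k af bf u (prQ k af bf (Δ' h)) = _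
  rw [mulRightQ_mk]

lemma PsiQ_eq_pr_mulMap (af bf : R → H) (Δ' : H →ₗ[k] H ⊗[k] H)
    (z : H ⊗[k] (H ⊗[k] H)) :
    PsiQ k af bf (prQ k af bf ∘ₗ Δ') z = prQ k af bf (mulMap k Δ' z) := by
  induction z using TensorProduct.induction_on with
  | zero => simp
  | tmul h u => rw [PsiQ_tmul, mulMap_tmul]
  | add u v hu hv => simp only [map_add, hu, hv]

lemma Lact_tmul (x y w h : H) (u : H ⊗[k] H) :
    Lact k x y w (h ⊗ₜ[k] u) = (x * h) ⊗ₜ[k] (u * (y ⊗ₜ[k] w)) := by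
  simp [Lact, map_mulRight_eq]

end Aux

/-- Proposition 3.2 of Xu, "Quantum groupoids".
Let `H` be a bialgebroid over `R` (source `α`, target `β` with commuting images,
`(R,R)`-bimodule coproduct `Δ` with `Δ(1) = 1 ⊗ 1`, represented by a lift
`Δ' : H → H ⊗[k] H` of `Δ : H → H ⊗_R H`).  Then the compatibility conditions
(a) `Δ(h)(β(a) ⊗ 1 - 1 ⊗ α(a)) = 0` in `H ⊗_R H` for all `a ∈ R`, `h ∈ H`, and
(b) `Δ(h₁h₂) = Δ(h₁)Δ(h₂)`
hold if and only if the kernel of `Ψ : H ⊗ H ⊗ H → H ⊗_R H`,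
`Ψ(h₁ ⊗ h₂ ⊗ h₃) = Δ(h₁)(h₂ ⊗ h₃)`, is a left ideal of `H ⊗ H^op ⊗ H^op`
(equivalently, is stable under the action of all `x ⊗ y ⊗ w ∈ H ⊗ H^op ⊗ H^op`). -/
theorem statement0
    (k H R : Type) [CommRing k] [Ring H] [Algebra k H] [Ring R] [Algebra k R]
    (α : R →ₐ[k] H) (β : R →ₐ[k] Hᵐᵒᵖ)
    (hcomm : ∀ a b : R, α a * (β b).unop = (β b).unop * α a)
    (Δ' : H →ₗ[k] H ⊗[k] H)
    -- `Δ(1) = 1 ⊗ 1` :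
    (hΔ1 : prQ k (fun a => α a) (fun a => (β a).unop) (Δ' 1)
      = prQ k (fun a => α a) (fun a => (β a).unop) ((1 : H) ⊗ₜ[k] (1 : H)))
    -- `Δ` is an `(R,R)`-bimodule map:
    (hΔl : ∀ (a : R) (h : H),
      prQ k (fun a => α a) (fun a => (β a).unop) (Δ' (α a * h))
        = prQ k (fun a => α a) (fun a => (β a).unop) ((α a ⊗ₜ[k] (1 : H)) * Δ' h))
    (hΔr : ∀ (a : R) (h : H),
      prQ k (fun a => α a) (fun a => (β a).unop) (Δ' ((β a).unop * h))
        = prQ k (fun a => α a) (fun a => (β a).unop) (((1 : H) ⊗ₜ[k] (β a).unop) * Δ' h)) :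
    -- (a) and (b) together:
    (((∀ (a : R) (h : H),
        prQ k (fun a => α a) (fun a => (β a).unop)
          (Δ' h * ((β a).unop ⊗ₜ[k] (1 : H) - (1 : H) ⊗ₜ[k] α a)) = 0)
      ∧ (∀ (h₁ h₂ : H) (u : H ⊗[k] H),
          prQ k (fun a => α a) (fun a => (β a).unop) u
            = prQ k (fun a => α a) (fun a => (β a).unop) (Δ' h₂) →
          prQ k (fun a => α a) (fun a => (β a).unop) (Δ' (h₁ * h₂))
            = prQ k (fun a => α a) (fun a => (β a).unop) (Δ' h₁ * u)))
    ↔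
    -- `Ker Ψ` is a left ideal of `H ⊗ H^op ⊗ H^op`:
    (∀ (x y w : H) (z : H ⊗[k] (H ⊗[k] H)),
        PsiQ k (fun a => α a) (fun a => (β a).unop)
          (prQ k (fun a => α a) (fun a => (β a).unop) ∘ₗ Δ') z = 0 →
        PsiQ k (fun a => α a) (fun a => (β a).unop)
          (prQ k (fun a => α a) (fun a => (β a).unop) ∘ₗ Δ') (Lact k x y w z) = 0)) := by
  set af : R → H := fun a => α a with haf
  set bf : R → H := fun a => (β a).unop with hbf
  have h1rel : Δ' 1 - (1 : H) ⊗ₜ[k] (1 : H) ∈ relQ k af bf := (prQ_eq_iff k af bf _ _).mp hΔ1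
  constructor
  · rintro ⟨ha, hb⟩ x y w z hz
    have ha' : ∀ (a : R) (h : H),
        Δ' h * ((bf a) ⊗ₜ[k] (1 : H) - (1 : H) ⊗ₜ[k] af a) ∈ relQ k af bf := by
      intro a h
      exact (prQ_eq_zero_iff k af bf _).mp (ha a h)
    have hmul : ∀ h₁ h₂ : H, Δ' (h₁ * h₂) - Δ' h₁ * Δ' h₂ ∈ relQ k af bf := by
      intro h₁ h₂
      exact (prQ_eq_iff k af bf _ _).mp (hb h₁ h₂ (Δ' h₂) rfl)
    -- key computation
    have hcomp : ∀ z' : H ⊗[k] (H ⊗[k] H),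
        PsiQ k af bf (prQ k af bf ∘ₗ Δ') (Lact k x y w z')
          = prQ k af bf (Δ' x * (mulMap k Δ' z' * (y ⊗ₜ[k] w))) := by
      intro z'
      induction z' using TensorProduct.induction_on with
      | zero => simp
      | tmul h u =>
          rw [Lact_tmul, PsiQ_tmul, mulMap_tmul]
          rw [prQ_eq_iff]
          have : Δ' (x * h) * (u * (y ⊗ₜ[k] w))
              - Δ' x * (Δ' h * u * (y ⊗ₜ[k] w))
              = (Δ' (x * h) - Δ' x * Δ' h) * (u * (y ⊗ₜ[k] w)) := by
            rw [sub_mul, mul_assoc, mul_assoc]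
          rw [this]
          exact relQ_mul_right k af bf (hmul x h) _
      | add u v hu hv => simp only [map_add, mul_add, add_mul, hu, hv]
    rw [hcomp]
    rw [PsiQ_eq_pr_mulMap] at hz
    have hm : mulMap k Δ' z ∈ relQ k af bf := (prQ_eq_zero_iff k af bf _).mp hz
    have hm2 : mulMap k Δ' z * (y ⊗ₜ[k] w) ∈ relQ k af bf := relQ_mul_right k af bf hm _
    exact (prQ_eq_zero_iff k af bf _).mpr (leftmul_rel k af bf (Δ' x) (fun a => ha' a x) hm2)
  · intro K
    have ha : ∀ (a : R) (h : H),
        prQ k af bf (Δ' h * ((bf a) ⊗ₜ[k] (1 : H) - (1 : H) ⊗ₜ[k] af a)) = 0 := by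
      intro a h
      set g : H ⊗[k] H := (bf a) ⊗ₜ[k] (1 : H) - (1 : H) ⊗ₜ[k] af a with hg
      have hgrel : g ∈ relQ k af bf :=
        Submodule.subset_span ⟨a, 1, 1, by simp [hg]⟩
      have hz : PsiQ k af bf (prQ k af bf ∘ₗ Δ') ((1 : H) ⊗ₜ[k] g) = 0 := by
        rw [PsiQ_tmul, prQ_eq_zero_iff]
        have : Δ' 1 * g = (Δ' 1 - (1 : H) ⊗ₜ[k] (1 : H)) * g + g := by
          rw [sub_mul, ← Algebra.TensorProduct.one_def, one_mul]; abel
        rw [this]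
        exact add_mem (relQ_mul_right k af bf h1rel g) hgrel
      have := K h 1 1 _ hz
      rwa [Lact_tmul, ← Algebra.TensorProduct.one_def, mul_one, mul_one, PsiQ_tmul] at this
    have hmul : ∀ h₁ h₂ : H,
        prQ k af bf (Δ' (h₁ * h₂)) = prQ k af bf (Δ' h₁ * Δ' h₂) := by
      intro h₁ h₂
      have hz : PsiQ k af bf (prQ k af bf ∘ₗ Δ')
          (h₂ ⊗ₜ[k] ((1 : H) ⊗ₜ[k] (1 : H)) - (1 : H) ⊗ₜ[k] Δ' h₂) = 0 := by
        rw [map_sub, PsiQ_tmul, PsiQ_tmul, ← Algebra.TensorProduct.one_def, mul_one]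
        rw [sub_eq_zero, prQ_eq_iff]
        have : Δ' h₂ - Δ' 1 * Δ' h₂
            = -((Δ' 1 - (1 : H) ⊗ₜ[k] (1 : H)) * Δ' h₂) := by
          rw [sub_mul, ← Algebra.TensorProduct.one_def, one_mul]; abel
        rw [this]
        exact neg_mem (relQ_mul_right k af bf h1rel _)
      have := K h₁ 1 1 _ hz
      rw [map_sub, Lact_tmul, Lact_tmul, map_sub, PsiQ_tmul, PsiQ_tmul,
        ← Algebra.TensorProduct.one_def, one_mul, mul_one, mul_one, mul_one,
        sub_eq_zero] at this
      exact this
    refine ⟨ha, ?_⟩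
    intro h₁ h₂ u hu
    rw [hmul h₁ h₂, prQ_eq_iff]
    have huu : u - Δ' h₂ ∈ relQ k af bf := (prQ_eq_iff k af bf _ _).mp hu
    have : Δ' h₁ * Δ' h₂ - Δ' h₁ * u = -(Δ' h₁ * (u - Δ' h₂)) := by
      rw [mul_sub, neg_sub]
    rw [this]
    exact neg_mem (leftmul_rel k af bf (Δ' h₁)
      (fun a => (prQ_eq_zero_iff k af bf _).mp (ha a h₁)) huu)

end
end

section
/- Let H be a Hopf algebroid over R with anchor, and suppose F = Σᵢ xᵢ ⊗_R yᵢ ∈ H ⊗_R H satisfies the cocycle identity ((Δ ⊗_R id)F)·F¹² = ((id ⊗_R Δ)F)·F²³ in H ⊗_R H ⊗_R H and the counit identity (ε ⊗_R id)F = 1_H = (id ⊗_R ε)F. Define a new multiplication on R by a *_F b = Σᵢ xᵢ(a)·yᵢ(b). Then (R, *_F) is an associative algebra with unit 1_R. -/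
open TensorProduct

noncomputable section

open TensorProduct

/-! Evaluate `H ⊗ H ⊗ H` on triples in `R` through the anchor,
`(x ⊗ y ⊗ z)(a, b, c) = x(a) y(b) z(c)`. This evaluation kills the balancing relations, so it
is defined on `H ⊗_R H ⊗_R H`. The hypothesis on `φ_α` makes the anchor compatible with the
coproduct, `x(ab) = Σ x₁(a) x₂(b)`, and with it the two sides of the cocycle identity evaluate
to `(a *_F b) *_F c` and `a *_F (b *_F c)`. Applying the counit identities to `a` gives
`1 *_F a = a = a *_F 1`. -/

section Evaluation

variable {k H R : Type} [CommRing k] [Ring H] [Algebra k H] [Ring R] [Algebra k R]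
  (μ : H →ₐ[k] Module.End k R)

lemma ev2_tmul (x y : H) (a b : R) : ev2 k μ (x ⊗ₜ[k] y) a b = μ x a * μ y b := by
  simp [ev2]

variable (k) in
def ev3 (a b c : R) : (H ⊗[k] H) ⊗[k] H →ₗ[k] R :=
  TensorProduct.lift <| (LinearMap.mul k R).compl₁₂
    (LinearMap.applyₗ b ∘ₗ LinearMap.applyₗ a ∘ₗ ev2 k μ)
    (LinearMap.applyₗ c ∘ₗ μ.toLinearMap)

lemma ev3_tmul (w : H ⊗[k] H) (z : H) (a b c : R) :
    ev3 k μ a b c (w ⊗ₜ[k] z) = ev2 k μ w a b * μ z c := by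
  simp [ev3]

lemma ev3_tmul_tmul (x y z : H) (a b c : R) :
    ev3 k μ a b c ((x ⊗ₜ[k] y) ⊗ₜ[k] z) = μ x a * μ y b * μ z c := by
  rw [ev3_tmul, ev2_tmul]

end Evaluation

section Relations

variable {k H R : Type} [CommRing k] [Ring H] [Algebra k H] [Ring R] [Algebra k R]
  {μ : H →ₐ[k] Module.End k R} {af bf : R → H}

lemma ev3_eq_zero_of_mem_relQ3 (hl : ∀ a b : R, μ (af a) b = a * b)
    (hr : ∀ a b : R, μ (bf a) b = b * a) (a b c : R)
    {w : (H ⊗[k] H) ⊗[k] H} (hw : w ∈ relQ3 k af bf) : ev3 k μ a b c w = 0 := by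
  suffices relQ3 k af bf ≤ LinearMap.ker (ev3 k μ a b c) from this hw
  refine Submodule.span_le.mpr ?_
  rintro _ (⟨d, x, y, z, rfl⟩ | ⟨d, x, y, z, rfl⟩) <;>
    simp only [SetLike.mem_coe, LinearMap.mem_ker, map_sub, ev3_tmul_tmul, map_mul,
      Module.End.mul_apply, hl, hr, mul_assoc, sub_self]

lemma ev3_eq_of_prQ3_eq (hl : ∀ a b : R, μ (af a) b = a * b)
    (hr : ∀ a b : R, μ (bf a) b = b * a) (a b c : R)
    {u v : (H ⊗[k] H) ⊗[k] H} (huv : prQ3 k af bf u = prQ3 k af bf v) :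
    ev3 k μ a b c u = ev3 k μ a b c v := by
  rw [← sub_eq_zero, ← map_sub]
  exact ev3_eq_zero_of_mem_relQ3 hl hr a b c ((Submodule.Quotient.eq _).mp huv)

end Relations

section Coproduct

variable {k H R : Type} [CommRing k] [Ring H] [Algebra k H] [Ring R] [Algebra k R]
  {μ : H →ₐ[k] Module.End k R}

lemma apply_phiAL {s : R →ₗ[k] H} (hs : ∀ a b : R, μ (s a) b = a * b)
    (u : H ⊗[k] H) (a b : R) : μ (phiAL k μ s u a) b = ev2 k μ u a b := by
  induction u using TensorProduct.induction_on with
  | zero => simp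
  | tmul x y => simp [phiAL, ev2_tmul, hs]
  | add u v hu hv => simp only [map_add, LinearMap.add_apply, hu, hv]

lemma apply_mul_eq_ev2_coproduct {s : R →ₗ[k] H} (hs : ∀ a b : R, μ (s a) b = a * b)
    {Δ' : H →ₗ[k] H ⊗[k] H} {x : H} {a : R} (hx : phiAL k μ s (Δ' x) a = x * s a) (b : R) :
    μ x (a * b) = ev2 k μ (Δ' x) a b := by
  rw [← hs, ← Module.End.mul_apply, ← map_mul, ← hx, apply_phiAL hs]

lemma ev3_mul_tmul_tmul (u : (H ⊗[k] H) ⊗[k] H) (p q r : H) (a b c : R) :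
    ev3 k μ a b c (u * ((p ⊗ₜ[k] q) ⊗ₜ[k] r)) = ev3 k μ (μ p a) (μ q b) (μ r c) u := by
  have key : ev3 k μ a b c ∘ₗ LinearMap.mulRight k ((p ⊗ₜ[k] q) ⊗ₜ[k] r)
      = ev3 k μ (μ p a) (μ q b) (μ r c) :=
    TensorProduct.ext_threefold fun x y z => by
      simp [ev3_tmul_tmul, Module.End.mul_apply]
  exact LinearMap.congr_fun key u

lemma ev3_assoc_symm_tmul (x : H) (w : H ⊗[k] H) (a b c : R) :
    ev3 k μ a b c ((TensorProduct.assoc k H H H).symm (x ⊗ₜ[k] w)) = μ x a * ev2 k μ w b c := by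
  induction w using TensorProduct.induction_on with
  | zero => simp
  | tmul p q => simp [ev3_tmul_tmul, ev2_tmul, mul_assoc]
  | add v w hv hw => simp only [tmul_add, map_add, LinearMap.add_apply, hv, hw, mul_add]

variable {Δ' : H →ₗ[k] H ⊗[k] H} (hΔ : ∀ (x : H) (a b : R), μ x (a * b) = ev2 k μ (Δ' x) a b)
include hΔ

lemma ev3_DL (G : H ⊗[k] H) (a b c : R) :
    ev3 k μ a b c (DL k Δ' G) = ev2 k μ G (a * b) c := by
  induction G using TensorProduct.induction_on with
  | zero => simp
  | tmul x y => simp [DL, ev3_tmul, ev2_tmul, hΔ]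
  | add u v hu hv => simp only [map_add, LinearMap.add_apply, hu, hv]

lemma ev3_DR (G : H ⊗[k] H) (a b c : R) :
    ev3 k μ a b c (DR k Δ' G) = ev2 k μ G a (b * c) := by
  induction G using TensorProduct.induction_on with
  | zero => simp
  | tmul x y => simp [DR, ev3_assoc_symm_tmul, ev2_tmul, hΔ]
  | add u v hu hv => simp only [map_add, LinearMap.add_apply, hu, hv]

lemma ev3_DL_mul_tmul_one (G F : H ⊗[k] H) (a b c : R) :
    ev3 k μ a b c (DL k Δ' G * (F ⊗ₜ[k] (1 : H))) = ev2 k μ G (ev2 k μ F a b) c := by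
  induction F using TensorProduct.induction_on with
  | zero => simp
  | tmul p q => simp [ev3_mul_tmul_tmul, ev3_DL hΔ, ev2_tmul]
  | add u v hu hv => simp only [add_tmul, mul_add, map_add, LinearMap.add_apply, hu, hv]

lemma ev3_DR_mul_aInv_one_tmul (G F : H ⊗[k] H) (a b c : R) :
    ev3 k μ a b c (DR k Δ' G * aInv k ((1 : H) ⊗ₜ[k] F)) = ev2 k μ G a (ev2 k μ F b c) := by
  induction F using TensorProduct.induction_on with
  | zero => simp [aInv]
  | tmul p q => simp [aInv, ev3_mul_tmul_tmul, ev3_DR hΔ, ev2_tmul]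
  | add u v hu hv => simp only [tmul_add, mul_add, map_add, LinearMap.add_apply, hu, hv]

theorem ev2_assoc_of_isCocycle {af bf : R → H} (hl : ∀ a b : R, μ (af a) b = a * b)
    (hr : ∀ a b : R, μ (bf a) b = b * a)
    {F : H ⊗[k] H} (hF : IsCocycle k af bf Δ' F) (a b c : R) :
    ev2 k μ F (ev2 k μ F a b) c = ev2 k μ F a (ev2 k μ F b c) := by
  rw [← ev3_DL_mul_tmul_one hΔ, ← ev3_DR_mul_aInv_one_tmul hΔ]
  exact ev3_eq_of_prQ3_eq hl hr a b c hF

end Coproduct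

section Counit

variable {k H R : Type} [CommRing k] [Ring H] [Algebra k H] [Ring R] [Algebra k R]
  {μ : H →ₐ[k] Module.End k R} {ε : H →ₗ[k] R} (hε : ∀ x : H, μ x 1 = ε x)
include hε

lemma apply_e1 {s : R →ₗ[k] H} (hs : ∀ a b : R, μ (s a) b = a * b) (u : H ⊗[k] H) (a : R) :
    μ (e1 k s ε u) a = ev2 k μ u 1 a := by
  induction u using TensorProduct.induction_on with
  | zero => simp
  | tmul x y => simp [e1, ev2_tmul, hs, hε]
  | add u v hu hv => simp only [map_add, LinearMap.add_apply, hu, hv]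

lemma apply_e2 {t : R →ₗ[k] H} (ht : ∀ a b : R, μ (t a) b = b * a) (u : H ⊗[k] H) (a : R) :
    μ (e2 k t ε u) a = ev2 k μ u a 1 := by
  induction u using TensorProduct.induction_on with
  | zero => simp
  | tmul x y => simp [e2, ev2_tmul, ht, hε]
  | add u v hu hv => simp only [map_add, LinearMap.add_apply, hu, hv]

theorem ev2_one_left_of_e1_eq_one {s : R →ₗ[k] H} (hs : ∀ a b : R, μ (s a) b = a * b)
    {F : H ⊗[k] H} (hF : e1 k s ε F = 1) (a : R) : ev2 k μ F 1 a = a := by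
  rw [← apply_e1 hε hs, hF, map_one, Module.End.one_apply]

theorem ev2_one_right_of_e2_eq_one {t : R →ₗ[k] H} (ht : ∀ a b : R, μ (t a) b = b * a)
    {F : H ⊗[k] H} (hF : e2 k t ε F = 1) (a : R) : ev2 k μ F a 1 = a := by
  rw [← apply_e2 hε ht, hF, map_one, Module.End.one_apply]

end Counit

theorem statement2_general
    (k H R : Type) [CommRing k] [Ring H] [Algebra k H] [Ring R] [Algebra k R]
    (α : R →ₐ[k] H) (β : R →ₐ[k] Hᵐᵒᵖ)
    (Δ' : H →ₗ[k] H ⊗[k] H) (ε : H →ₗ[k] R)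
    (μ : H →ₐ[k] Module.End k R)
    (hbl : ∀ (a : R) (h : H) (b : R), μ (α a * h) b = a * μ h b)
    (hbr : ∀ (a : R) (h : H) (b : R), μ ((β a).unop * h) b = μ h b * a)
    (hA : ∀ (x : H) (a : R) (u : H ⊗[k] H),
      prQ k (fun a => α a) (fun a => (β a).unop) u
        = prQ k (fun a => α a) (fun a => (β a).unop) (Δ' x) →
      phiAL k μ α.toLinearMap u a = x * α a)
    (hε : ∀ x : H, μ x 1 = ε x)
    (F' : H ⊗[k] H)
    -- the cocycle identity:
    (hcoc : IsCocycle k (fun a => α a) (fun a => (β a).unop) Δ' F')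
    -- the counit identity:
    (hcou : IsCounital k α.toLinearMap (unopL k β) ε F') :
    -- `(R, *_F)` is associative with unit `1_R`, where `a *_F b := F(a, b)`:
    ((∀ a b c : R, ev2 k μ F' (ev2 k μ F' a b) c = ev2 k μ F' a (ev2 k μ F' b c))
    ∧ (∀ a : R, ev2 k μ F' 1 a = a ∧ ev2 k μ F' a 1 = a)) := by
  have hα : ∀ a b : R, μ (α a) b = a * b := fun a b => by simpa using hbl a 1 b
  have hβ : ∀ a b : R, μ (β a).unop b = b * a := fun a b => by simpa using hbr a 1 b
  have hΔ : ∀ (x : H) (a b : R), μ x (a * b) = ev2 k μ (Δ' x) a b := fun x a b =>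
    apply_mul_eq_ev2_coproduct (s := α.toLinearMap) hα (hA x a (Δ' x) rfl) b
  exact ⟨ev2_assoc_of_isCocycle hΔ hα hβ hcoc, fun a =>
    ⟨ev2_one_left_of_e1_eq_one hε (s := α.toLinearMap) hα hcou.1 a,
      ev2_one_right_of_e2_eq_one hε (t := unopL k β) hβ hcou.2 a⟩⟩

/-- Proposition 4.2 (i).  Let `H` be a Hopf algebroid over `R` with
anchor `μ`, and suppose `F = Σᵢ xᵢ ⊗_R yᵢ ∈ H ⊗_R H` (represented by `F' ∈ H ⊗[k] H`)
satisfies the cocycle identity `((Δ ⊗_R id)F)·F¹² = ((id ⊗_R Δ)F)·F²³` in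
`H ⊗_R H ⊗_R H` and the counit identity `(ε ⊗_R id)F = 1_H = (id ⊗_R ε)F`.
Define `a *_F b = Σᵢ xᵢ(a)·yᵢ(b)`.  Then `(R, *_F)` is an associative algebra with
unit `1_R`. -/
theorem statement2
    (k H R : Type) [CommRing k] [Ring H] [Algebra k H] [Ring R] [Algebra k R]
    (α : R →ₐ[k] H) (β : R →ₐ[k] Hᵐᵒᵖ)
    (hcomm : ∀ a b : R, α a * (β b).unop = (β b).unop * α a)
    (Δ' : H →ₗ[k] H ⊗[k] H) (ε : H →ₗ[k] R)
    (μ : H →ₐ[k] Module.End k R)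
    (hbl : ∀ (a : R) (h : H) (b : R), μ (α a * h) b = a * μ h b)
    (hbr : ∀ (a : R) (h : H) (b : R), μ ((β a).unop * h) b = μ h b * a)
    (hA : ∀ (x : H) (a : R) (u : H ⊗[k] H),
      prQ k (fun a => α a) (fun a => (β a).unop) u
        = prQ k (fun a => α a) (fun a => (β a).unop) (Δ' x) →
      phiAL k μ α.toLinearMap u a = x * α a)
    (hB : ∀ (x : H) (a : R) (u : H ⊗[k] H),
      prQ k (fun a => α a) (fun a => (β a).unop) u
        = prQ k (fun a => α a) (fun a => (β a).unop) (Δ' x) →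
      phiBL k μ (unopL k β) u a = x * (β a).unop)
    (hε : ∀ x : H, μ x 1 = ε x)
    (F' : H ⊗[k] H)
    -- the cocycle identity:
    (hcoc : IsCocycle k (fun a => α a) (fun a => (β a).unop) Δ' F')
    -- the counit identity:
    (hcou : IsCounital k α.toLinearMap (unopL k β) ε F') :
    -- `(R, *_F)` is associative with unit `1_R`, where `a *_F b := F(a, b)`:
    ((∀ a b c : R, ev2 k μ F' (ev2 k μ F' a b) c = ev2 k μ F' a (ev2 k μ F' b c))
    ∧ (∀ a : R, ev2 k μ F' 1 a = a ∧ ev2 k μ F' a 1 = a)) :=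
  statement2_general k H R α β Δ' ε μ hbl hbr hA hε F' hcoc hcou

end
end

section
/- Let F ∈ H ⊗_R H satisfy the cocycle identity ((Δ ⊗_R id)F)·F¹² = ((id ⊗_R Δ)F)·F²³ and the counit identity. Then F·(β_F(a) ⊗ 1 − 1 ⊗ α_F(a)) = 0 in H ⊗_R H for all a ∈ R. -/
open TensorProduct

noncomputable section

open TensorProduct

section Aux

variable {k H R : Type} [CommRing k] [Ring H] [Algebra k H] [Ring R] [Algebra k R]

/-- Representative-level map `(u ⊗ v) ⊗ w ↦ (β(μ(v)(a)).unop * u) ⊗ w`. -/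
def thetaM (μ : H →ₐ[k] Module.End k R) (β : R →ₐ[k] Hᵐᵒᵖ) (a : R) :
    (H ⊗[k] H) ⊗[k] H →ₗ[k] H ⊗[k] H :=
  TensorProduct.lift (TensorProduct.lift (LinearMap.mk₂ k
    (fun x y => TensorProduct.mk k H H ((β ((μ y) a)).unop * x))
    (by intro x₁ x₂ y; simp [mul_add, map_add])
    (by intro c x y; simp [mul_smul_comm, map_smul])
    (by intro x y₁ y₂; simp [map_add, LinearMap.add_apply, add_mul])
    (by intro c x y; simp [map_smul, LinearMap.smul_apply, smul_mul_assoc])))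

lemma thetaM_tmul (μ : H →ₐ[k] Module.End k R) (β : R →ₐ[k] Hᵐᵒᵖ) (a : R) (x y z : H) :
    thetaM μ β a ((x ⊗ₜ[k] y) ⊗ₜ[k] z) = ((β ((μ y) a)).unop * x) ⊗ₜ[k] z := by
  simp [thetaM]

lemma phiBL_tmul (μ : H →ₐ[k] Module.End k R) (s : R →ₗ[k] H) (x y : H) (a : R) :
    phiBL k μ s (x ⊗ₜ[k] y) a = s ((μ y) a) * x := by
  simp [phiBL]

lemma phiAL_tmul (μ : H →ₐ[k] Module.End k R) (s : R →ₗ[k] H) (x y : H) (a : R) :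
    phiAL k μ s (x ⊗ₜ[k] y) a = s ((μ x) a) * y := by
  simp [phiAL]

lemma unopL_apply (β : R →ₐ[k] Hᵐᵒᵖ) (a : R) : unopL k β a = (β a).unop := rfl

lemma endMul_apply (μ : H →ₐ[k] Module.End k R) (x y : H) (a : R) :
    (μ (x * y)) a = (μ x) ((μ y) a) := by
  rw [map_mul]; rfl

end Aux

/-- Proposition 4.3.  Let `F ∈ H ⊗_R H` satisfy the cocycle
identity `((Δ ⊗_R id)F)·F¹² = ((id ⊗_R Δ)F)·F²³` and the counit identity.  Then
`F·(β_F(a) ⊗ 1 - 1 ⊗ α_F(a)) = 0` in `H ⊗_R H` for all `a ∈ R`. -/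
theorem statement4
    (k H R : Type) [CommRing k] [Ring H] [Algebra k H] [Ring R] [Algebra k R]
    (α : R →ₐ[k] H) (β : R →ₐ[k] Hᵐᵒᵖ)
    (hcomm : ∀ a b : R, α a * (β b).unop = (β b).unop * α a)
    (Δ' : H →ₗ[k] H ⊗[k] H) (ε : H →ₗ[k] R)
    (μ : H →ₐ[k] Module.End k R)
    (hbl : ∀ (a : R) (h : H) (b : R), μ (α a * h) b = a * μ h b)
    (hbr : ∀ (a : R) (h : H) (b : R), μ ((β a).unop * h) b = μ h b * a)
    (hA : ∀ (x : H) (a : R) (u : H ⊗[k] H),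
      prQ k (fun a => α a) (fun a => (β a).unop) u
        = prQ k (fun a => α a) (fun a => (β a).unop) (Δ' x) →
      phiAL k μ α.toLinearMap u a = x * α a)
    (hB : ∀ (x : H) (a : R) (u : H ⊗[k] H),
      prQ k (fun a => α a) (fun a => (β a).unop) u
        = prQ k (fun a => α a) (fun a => (β a).unop) (Δ' x) →
      phiBL k μ (unopL k β) u a = x * (β a).unop)
    (hε : ∀ x : H, μ x 1 = ε x)
    (F' : H ⊗[k] H)
    (hcoc : IsCocycle k (fun a => α a) (fun a => (β a).unop) Δ' F')
    (hcou : IsCounital k α.toLinearMap (unopL k β) ε F') :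
    ∀ a : R,
      prQ k (fun a => α a) (fun a => (β a).unop)
        (F' * (phiBL k μ (unopL k β) F' a ⊗ₜ[k] (1 : H)
                - (1 : H) ⊗ₜ[k] phiAL k μ α.toLinearMap F' a)) = 0 := by
  intro a
  -- θ maps the triple-product relations into the double-product relations
  have hrel : relQ3 k (fun a => α a) (fun a => (β a).unop)
      ≤ (relQ k (fun a => α a) (fun a => (β a).unop)).comap (thetaM μ β a) := by
    rw [relQ3, Submodule.span_le]
    rintro w (⟨b, x, y, z, rfl⟩ | ⟨b, x, y, z, rfl⟩)
    · simp only [SetLike.mem_coe, Submodule.mem_comap, map_sub, thetaM_tmul]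
      have h1 : (μ ((fun a => α a) b * y)) a = b * (μ y) a := hbl b y a
      have h2 : (β (b * (μ y) a)).unop = (β ((μ y) a)).unop * (β b).unop := by
        rw [map_mul, MulOpposite.unop_mul]
      rw [h1, h2, mul_assoc, sub_self]
      exact Submodule.zero_mem _
    · simp only [SetLike.mem_coe, Submodule.mem_comap, map_sub, thetaM_tmul]
      have h1 : (μ ((fun a => (β a).unop) b * y)) a = (μ y) a * b := hbr b y a
      have h2 : (β ((μ y) a * b)).unop = (β b).unop * (β ((μ y) a)).unop := by
        rw [map_mul, MulOpposite.unop_mul]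
      rw [h1, h2, mul_assoc]
      exact Submodule.subset_span ⟨b, (β ((μ y) a)).unop * x, z, rfl⟩
  -- θ descends to the quotients
  have factor : ∀ w₁ w₂ : (H ⊗[k] H) ⊗[k] H,
      prQ3 k (fun a => α a) (fun a => (β a).unop) w₁
        = prQ3 k (fun a => α a) (fun a => (β a).unop) w₂ →
      prQ k (fun a => α a) (fun a => (β a).unop) (thetaM μ β a w₁)
        = prQ k (fun a => α a) (fun a => (β a).unop) (thetaM μ β a w₂) := by
    intro w₁ w₂ h
    rw [prQ3, Submodule.mkQ_apply, Submodule.mkQ_apply, Submodule.Quotient.eq] at h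
    rw [prQ, Submodule.mkQ_apply, Submodule.mkQ_apply, Submodule.Quotient.eq]
    have := hrel h
    rwa [Submodule.mem_comap, map_sub] at this
  -- θ applied to a product with F¹² on the right
  have lemA : ∀ (u : H ⊗[k] H) (p q y : H),
      thetaM μ β a ((u * (p ⊗ₜ[k] q)) ⊗ₜ[k] y)
        = (phiBL k μ (unopL k β) u ((μ q) a) * p) ⊗ₜ[k] y := by
    intro u p q y
    induction u using TensorProduct.induction_on with
    | zero => simp
    | tmul x₁ x₂ =>
        rw [Algebra.TensorProduct.tmul_mul_tmul, thetaM_tmul, phiBL_tmul,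
          endMul_apply, unopL_apply, mul_assoc]
    | add u v hu hv =>
        rw [add_mul, add_tmul, map_add, hu, hv, map_add, LinearMap.add_apply,
          add_mul, add_tmul]
  -- left-hand side of the cocycle identity
  have lemLHS : ∀ (G F : H ⊗[k] H),
      thetaM μ β a (DL k Δ' G * (F ⊗ₜ[k] (1 : H)))
        = G * (phiBL k μ (unopL k β) F a ⊗ₜ[k] (1 : H)) := by
    intro G F
    induction F using TensorProduct.induction_on with
    | zero => simp [zero_tmul]
    | tmul p q =>
        induction G using TensorProduct.induction_on with
        | zero => simp [DL]
        | tmul x y =>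
            rw [DL]
            simp only [TensorProduct.map_tmul, LinearMap.id_coe, id_eq]
            rw [Algebra.TensorProduct.tmul_mul_tmul, lemA,
              hB x ((μ q) a) (Δ' x) rfl, phiBL_tmul,
              Algebra.TensorProduct.tmul_mul_tmul, unopL_apply, mul_assoc]
        | add G₁ G₂ h₁ h₂ =>
            rw [map_add, add_mul, map_add, h₁, h₂, add_mul]
    | add F₁ F₂ h₁ h₂ =>
        rw [add_tmul, mul_add, map_add, h₁, h₂, map_add, LinearMap.add_apply,
          add_tmul, mul_add]
  -- θ applied to a product with F²³ on the right, modulo the relations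
  have lemB : ∀ (u : H ⊗[k] H) (x p q : H),
      prQ k (fun a => α a) (fun a => (β a).unop)
          (thetaM μ β a (aInv k (x ⊗ₜ[k] u) * (((1 : H) ⊗ₜ[k] p) ⊗ₜ[k] q)))
        = prQ k (fun a => α a) (fun a => (β a).unop)
          (x ⊗ₜ[k] (phiAL k μ α.toLinearMap u ((μ p) a) * q)) := by
    intro u x p q
    induction u using TensorProduct.induction_on with
    | zero => simp [aInv, tmul_zero]
    | tmul y₁ y₂ =>
        rw [aInv]
        simp only [LinearEquiv.coe_coe, TensorProduct.assoc_symm_tmul]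
        rw [Algebra.TensorProduct.tmul_mul_tmul, Algebra.TensorProduct.tmul_mul_tmul,
          thetaM_tmul, phiAL_tmul, endMul_apply, mul_one]
        rw [prQ, Submodule.mkQ_apply, Submodule.mkQ_apply, Submodule.Quotient.eq]
        refine Submodule.subset_span ⟨(μ y₁) ((μ p) a), x, y₂ * q, ?_⟩
        rw [mul_assoc]
        rfl
    | add u v hu hv =>
        rw [tmul_add, map_add, add_mul, map_add, map_add, hu, hv, map_add,
          LinearMap.add_apply, add_mul, tmul_add, map_add]
  -- right-hand side of the cocycle identity
  have lemRHS : ∀ (G F : H ⊗[k] H),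
      prQ k (fun a => α a) (fun a => (β a).unop)
          (thetaM μ β a (DR k Δ' G * aInv k ((1 : H) ⊗ₜ[k] F)))
        = prQ k (fun a => α a) (fun a => (β a).unop)
          (G * ((1 : H) ⊗ₜ[k] phiAL k μ α.toLinearMap F a)) := by
    intro G F
    induction F using TensorProduct.induction_on with
    | zero => simp [aInv, tmul_zero]
    | tmul p q =>
        induction G using TensorProduct.induction_on with
        | zero => simp [DR]
        | tmul x y =>
            have hDR : DR k Δ' (x ⊗ₜ[k] y) = aInv k (x ⊗ₜ[k] Δ' y) := by
              simp [DR, aInv]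
            have haF : aInv k ((1 : H) ⊗ₜ[k] (p ⊗ₜ[k] q))
                = ((1 : H) ⊗ₜ[k] p) ⊗ₜ[k] q := by
              simp [aInv]
            rw [hDR, haF, lemB (Δ' y) x p q, hA y ((μ p) a) (Δ' y) rfl,
              phiAL_tmul, Algebra.TensorProduct.tmul_mul_tmul, mul_one, mul_assoc]
            rfl
        | add G₁ G₂ h₁ h₂ =>
            rw [map_add, add_mul, map_add, map_add, h₁, h₂, add_mul, map_add]
    | add F₁ F₂ h₁ h₂ =>
        rw [tmul_add, map_add, mul_add, map_add, map_add, h₁, h₂, map_add,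
          LinearMap.add_apply, tmul_add, mul_add, map_add]
  -- put everything together
  unfold IsCocycle at hcoc
  have hc := factor _ _ hcoc
  rw [lemLHS F' F'] at hc
  rw [lemRHS F' F'] at hc
  rw [mul_sub, map_sub, hc, sub_self]

end
end

section
/- Let (U_ℏA, R_ℏ, α_ℏ, β_ℏ, m_ℏ, Δ_ℏ, ε_ℏ) be a deformation of the standard Hopf algebroid UA of a Lie algebroid A over P (a quantum groupoid). Define δf = lim_{ℏ→0} (1/ℏ)(α_ℏ f − β_ℏ f) ∈ UA for f ∈ R = C^∞(P). Then for all f, g ∈ R: (i) δ(fg) = f·δg + g·δf, and (ii) [δf, g] = {f, g}, where {f,g} = lim_{ℏ→0}(1/ℏ)(f*_ℏ g − g*_ℏ f) is the induced Poisson bracket on P. -/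
noncomputable section

open Finset

/-- Extension of the deformed product `m : U → U → U[[ℏ]]` to formal series
(represented as coefficient functions `ℕ → U`). -/
def StarS {U : Type} [AddCommMonoid U] (m : U → U → ℕ → U) (x y : ℕ → U) : ℕ → U :=
  fun n => ∑ p ∈ antidiagonal n, ∑ q ∈ antidiagonal p.2, m (x q.1) (y q.2) p.1

/-- `ℏ`-linear extension of a map `R → U[[ℏ]]` to `R[[ℏ]] → U[[ℏ]]`. -/
def ExtS {U R : Type} [AddCommMonoid U] (s : R → ℕ → U) (f : ℕ → R) : ℕ → U :=
  fun n => ∑ p ∈ antidiagonal n, s (f p.1) p.2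

lemma antidiagonal_one' : antidiagonal 1 = ({(0,1),(1,0)} : Finset (ℕ×ℕ)) := by decide

lemma ExtS_one {U R : Type} [AddCommMonoid U] (s : R → ℕ → U) (f : ℕ → R) :
    ExtS s f 1 = s (f 0) 1 + s (f 1) 0 := by
  simp [ExtS, antidiagonal_one']

lemma StarS_one {U : Type} [AddCommMonoid U] (m : U → U → ℕ → U) (x y : ℕ → U) :
    StarS m x y 1 = m (x 0) (y 0) 1 + (m (x 0) (y 1) 0 + m (x 1) (y 0) 0) := by
  simp [StarS, antidiagonal_one']
  abel

/-- Corollary 5.6.  Let `U_ℏA` be a quantum groupoid deforming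
the standard Hopf algebroid `UA` of a Lie algebroid `A` over `P`, with
`R = C^∞(P)` embedded in `UA` via `ι`.  Define
`δf = lim_{ℏ→0} (1/ℏ)(α_ℏ f − β_ℏ f) = α₁f − β₁f ∈ UA`.  Then for all `f, g ∈ R`:
(i) `δ(fg) = f·δg + g·δf`, and (ii) `[δf, g] = {f, g}` where
`{f,g} = B₁(f,g) − B₁(g,f)` is the induced Poisson bracket. -/
theorem statement9
    (k U R : Type) [CommRing k] [Ring U] [Algebra k U] [CommRing R] [Algebra k R]
    (ι : R →ₐ[k] U)
    (mU : U → U → ℕ → U) (mR : R → R → ℕ → R)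
    (αh βh : R → ℕ → U)
    -- classical limits:
    (hmU0 : ∀ x y : U, mU x y 0 = x * y)
    (hmR0 : ∀ f g : R, mR f g 0 = f * g)
    (hα0 : ∀ f : R, αh f 0 = ι f)
    (hβ0 : ∀ f : R, βh f 0 = ι f)
    -- `α_ℏ` is an algebra homomorphism, `β_ℏ` an algebra anti-homomorphism:
    (hαmul : ∀ f g : R, ExtS αh (mR f g) = StarS mU (αh f) (αh g))
    (hβmul : ∀ f g : R, ExtS βh (mR f g) = StarS mU (βh g) (βh f))
    -- the images of `α_ℏ` and `β_ℏ` commute: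
    (hcomm : ∀ f g : R, StarS mU (αh f) (βh g) = StarS mU (βh g) (αh f)) :
    ∀ f g : R,
      -- (i) `δ(fg) = f·δg + g·δf`:
      ((αh (f * g) 1 - βh (f * g) 1)
          = ι f * (αh g 1 - βh g 1) + ι g * (αh f 1 - βh f 1))
      -- (ii) `[δf, g] = {f, g}`:
      ∧ ((αh f 1 - βh f 1) * ι g - ι g * (αh f 1 - βh f 1)
          = ι (mR f g 1 - mR g f 1)) := by
  intro f g
  have hA := congrFun (hαmul f g) 1
  have hB := congrFun (hβmul f g) 1
  have hB' := congrFun (hβmul g f) 1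
  have hC := congrFun (hcomm f g) 1
  rw [ExtS_one, StarS_one] at hA hB hB'
  rw [StarS_one, StarS_one] at hC
  simp only [hα0, hβ0, hmR0, hmU0] at hA hB hB' hC
  have hgf : g * f = f * g := mul_comm g f
  rw [hgf] at hB'
  have hi : (αh (f * g) 1 - βh (f * g) 1)
      = ι f * (αh g 1 - βh g 1) + ι g * (αh f 1 - βh f 1) := by
    have e1 : αh (f * g) 1 = mU (ι f) (ι g) 1 + (ι f * αh g 1 + αh f 1 * ι g) - ι (mR f g 1) := by
      rw [← hA]; abel
    have e2 : βh (f * g) 1 = mU (ι g) (ι f) 1 + (ι g * βh f 1 + βh g 1 * ι f) - ι (mR f g 1) := by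
      rw [← hB]; abel
    rw [e1, e2]
    have e3 : mU (ι f) (ι g) 1 - mU (ι g) (ι f) 1
        = (ι g * αh f 1 + βh g 1 * ι f) - (ι f * βh g 1 + αh f 1 * ι g) := by
      linear_combination (norm := noncomm_ring) hC
    linear_combination (norm := noncomm_ring) e3
  refine ⟨hi, ?_⟩
  have e4 : ι (mR f g 1) = mU (ι f) (ι g) 1 + (ι f * αh g 1 + αh f 1 * ι g) - αh (f * g) 1 := by
    linear_combination (norm := noncomm_ring) hA
  have e5 : ι (mR g f 1) = mU (ι f) (ι g) 1 + (ι f * βh g 1 + βh f 1 * ι g) - βh (f * g) 1 := by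
    linear_combination (norm := noncomm_ring) hB'
  rw [map_sub, e4, e5]
  linear_combination (norm := noncomm_ring) hi

end
end

section
/- Let η be a finite-dimensional abelian Lie algebra with basis h₁,…,h_k, and let H = D ⊗ U_ℏ𝔤 be the Hopf algebroid over R = M(η*)[[ℏ]], where D is the algebra of meromorphic differential operators on η*. Set θ = Σᵢ (∂/∂λᵢ ⊗ hᵢ) ∈ H⊗H and Θ = exp(ℏθ). Then Θ satisfies the twistor cocycle identity ((Δ ⊗_R id)Θ)Θ¹² = ((id ⊗_R Δ)Θ)Θ²³ and the counit identities (ε ⊗_R id)Θ = (id ⊗_R ε)Θ = 1. -/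
open TensorProduct

noncomputable section

open TensorProduct

variable (k : Type) {R D G : Type} [Field k] [CharZero k]
  [CommRing R] [Algebra k R] [Ring D] [Algebra k D]
  [Ring G] [Bialgebra k G]

/-- The source map of the Hopf algebroid `H = D ⊗ U_ℏ𝔤` over `R = M(η*)[[ℏ]]`. -/
def srcH (G : Type) [Ring G] [Bialgebra k G] (αD : R →ₐ[k] D) : R →ₐ[k] D ⊗[k] G :=
  (Algebra.TensorProduct.includeLeft : D →ₐ[k] D ⊗[k] G).comp αD

/-- The target map of `H = D ⊗ U_ℏ𝔤` (equal to the source map; it is an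
anti-homomorphism since the image of `αD` is commutative). -/
def tgtH (αD : R →ₐ[k] D) (hα : ∀ a b : R, αD a * αD b = αD b * αD a) :
    R →ₐ[k] (D ⊗[k] G)ᵐᵒᵖ where
  toFun a := MulOpposite.op (srcH k G αD a)
  map_one' := by simp
  map_mul' a b := by
    have hc : srcH k G αD a * srcH k G αD b = srcH k G αD b * srcH k G αD a := by
      rw [← map_mul, ← map_mul, mul_comm]
    show MulOpposite.op (srcH k G αD (a * b))
        = MulOpposite.op (srcH k G αD a) * MulOpposite.op (srcH k G αD b)
    rw [← MulOpposite.op_mul, map_mul, hc]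
  map_zero' := by simp
  map_add' a b := by simp
  commutes' c := by
    show MulOpposite.op (srcH k G αD (algebraMap k R c)) = algebraMap k (D ⊗[k] G)ᵐᵒᵖ c
    rw [MulOpposite.algebraMap_apply]
    exact congrArg MulOpposite.op ((srcH k G αD).commutes c)

/-- The coproduct of `H = D ⊗ U_ℏ𝔤`, built from a lift `Δ'D` of the coproduct of
`D` and the comultiplication of `G`. -/
def copH (Δ'D : D →ₗ[k] D ⊗[k] D) :
    D ⊗[k] G →ₗ[k] (D ⊗[k] G) ⊗[k] (D ⊗[k] G) :=
  (TensorProduct.tensorTensorTensorComm k D D G G).toLinearMap ∘ₗ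
    TensorProduct.map Δ'D (Coalgebra.comul (R := k) (A := G))

/-- The counit of `H = D ⊗ U_ℏ𝔤`: `ε(x ⊗ u) = ε₀(u) • x(1)`. -/
def couH (μD : D →ₐ[k] Module.End k R) : D ⊗[k] G →ₗ[k] R :=
  TensorProduct.lift (LinearMap.mk₂ k
    (fun x u => Coalgebra.counit (R := k) u • μD x 1)
    (by intro x₁ x₂ u; simp only [map_add, LinearMap.add_apply, smul_add])
    (by intro c x u; simp only [map_smul, LinearMap.smul_apply]; rw [smul_comm])
    (by intro x u₁ u₂; simp only [map_add, add_smul])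
    (by intro c x u; simp only [map_smul]; rw [smul_assoc]))

/-- The anchor of `H = D ⊗ U_ℏ𝔤`: `μ(x ⊗ u)(f) = ε₀(u) x(f)`. -/
def ancH (μD : D →ₐ[k] Module.End k R) : D ⊗[k] G →ₐ[k] Module.End k R :=
  Algebra.TensorProduct.lift μD
    ((Algebra.ofId k (Module.End k R)).comp (Bialgebra.counitAlgHom k G))
    (fun x u => by
      show μD x * algebraMap k (Module.End k R) ((Bialgebra.counitAlgHom k G) u)
          = algebraMap k (Module.End k R) ((Bialgebra.counitAlgHom k G) u) * μD x
      exact (Algebra.commutes _ _).symm)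

/-- `θ = Σᵢ ∂/∂λᵢ ⊗ hᵢ` as an element of `H ⊗ H`. -/
def thetaH {N : ℕ} (d : Fin N → D) (h : Fin N → G) :
    (D ⊗[k] G) ⊗[k] (D ⊗[k] G) :=
  ∑ i, (d i ⊗ₜ[k] (1 : G)) ⊗ₜ[k] ((1 : D) ⊗ₜ[k] h i)

/-- `Θ = exp(ℏθ)` as a formal series: `Θₙ = θⁿ/n!`. -/
def ThetaH {N : ℕ} (d : Fin N → D) (h : Fin N → G) (n : ℕ) :
    (D ⊗[k] G) ⊗[k] (D ⊗[k] G) :=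
  ((n.factorial : k)⁻¹) • (thetaH k d h) ^ n

end

/-!
Write `θ¹²`, `θ²³`, `θ¹³` for the three copies of `θ` in `H ⊗ H ⊗ H`. As the `∂/∂λᵢ` and the
`hᵢ` are primitive, `(Δ ⊗ id)θ = θ¹³ + θ²³` and `(id ⊗ Δ)θ = θ¹² + θ¹³`; as `Δ` is
multiplicative modulo the relations of `⊗_R`, which form a right ideal, `(Δ ⊗ id)(θⁿ)` is
congruent to `(θ¹³ + θ²³)ⁿ`, and similarly on the other side. All the `θ`'s commute, so by the
binomial formula both sides of the cocycle identity are, degree by degree, `exp(θ¹² + θ¹³ + θ²³)`.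
The counit kills every element ending in some `∂/∂λᵢ` (they annihilate `1`) or some `hᵢ`
(`ε₀(hᵢ) = 0`), so only the degree-zero part of `Θ` survives `ε ⊗_R id` and `id ⊗_R ε`.
-/

open TensorProduct Finset

theorem Commute.inv_factorial_smul_add_pow {k A : Type} [Field k] [CharZero k] [Ring A]
    [Algebra k A] {s x : A} (h : Commute s x) (n : ℕ) :
    (n.factorial : k)⁻¹ • (s + x) ^ n
      = ∑ p ∈ antidiagonal n,
          ((p.1.factorial : k)⁻¹ • s ^ p.1) * ((p.2.factorial : k)⁻¹ • x ^ p.2) := by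
  rw [h.add_pow', Finset.smul_sum]
  refine Finset.sum_congr rfl fun p hp => ?_
  rw [← Nat.cast_smul_eq_nsmul k, smul_smul, smul_mul_smul_comm, ← mem_antidiagonal.mp hp,
    Nat.cast_add_choose]
  congr 1
  field_simp [Nat.factorial_ne_zero]

section RightIdeal

variable {k A B : Type} [CommRing k] [Ring A] [Algebra k A] [Ring B] [Algebra k B]
  {I : Submodule k B}

theorem map_pow_sub_pow_mem (hI : ∀ w ∈ I, ∀ u, w * u ∈ I) {F : A →ₗ[k] B} (h1 : F 1 = 1)
    {θ : A} (hmul : ∀ u, F (u * θ) - F u * F θ ∈ I) (p : ℕ) : F (θ ^ p) - F θ ^ p ∈ I := by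
  induction p with
  | zero => simp [h1]
  | succ p ih =>
    have hsplit : F (θ ^ (p + 1)) - F θ ^ (p + 1)
        = (F (θ ^ p * θ) - F (θ ^ p) * F θ) + (F (θ ^ p) - F θ ^ p) * F θ := by
      rw [pow_succ, pow_succ, sub_mul]; abel
    rw [hsplit]
    exact add_mem (hmul _) (hI _ ih _)

theorem map_mul_sub_mem_of_tmul {A₁ A₂ : Type} [Ring A₁] [Algebra k A₁] [Ring A₂]
    [Algebra k A₂] (F : A₁ ⊗[k] A₂ →ₗ[k] B)
    (h : ∀ x y a b, F ((x ⊗ₜ y) * (a ⊗ₜ b)) - F (x ⊗ₜ y) * F (a ⊗ₜ b) ∈ I)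
    (u v : A₁ ⊗[k] A₂) : F (u * v) - F u * F v ∈ I := by
  induction u using TensorProduct.induction_on with
  | zero => simp
  | add u₁ u₂ h₁ h₂ =>
    convert add_mem h₁ h₂ using 1
    rw [add_mul, map_add, map_add, add_mul]; abel
  | tmul x y =>
    induction v using TensorProduct.induction_on with
    | zero => simp
    | add v₁ v₂ h₁ h₂ =>
      convert add_mem h₁ h₂ using 1
      rw [mul_add, map_add, map_add, mul_add]; abel
    | tmul a b => exact h x y a b

end RightIdeal

theorem sum_antidiagonal_map_mul_sub_mem {k A B : Type} [Field k] [CharZero k] [Ring A]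
    [Algebra k A] [Ring B] [Algebra k B] {I : Submodule k B} (hI : ∀ w ∈ I, ∀ u, w * u ∈ I)
    (F : A →ₗ[k] B) (g : A →ₐ[k] B) {θ : A} (hF : ∀ p, F (θ ^ p) - F θ ^ p ∈ I)
    (hcomm : Commute (F θ) (g θ)) (n : ℕ) :
    ∑ p ∈ antidiagonal n,
        F ((p.1.factorial : k)⁻¹ • θ ^ p.1) * g ((p.2.factorial : k)⁻¹ • θ ^ p.2)
      - (n.factorial : k)⁻¹ • (F θ + g θ) ^ n ∈ I := by
  rw [hcomm.inv_factorial_smul_add_pow, ← Finset.sum_sub_distrib]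
  refine Submodule.sum_mem _ fun p _ => ?_
  rw [map_smul, map_smul, map_pow g, smul_mul_assoc, smul_mul_assoc, ← smul_sub, ← sub_mul]
  exact I.smul_mem _ (hI _ (hF _) _)

section RelativeTensor

variable {k H R : Type} [CommRing k] [Ring H] [Algebra k H] {af bf : R → H}

theorem aInv_mul (u v : H ⊗[k] (H ⊗[k] H)) : aInv k (u * v) = aInv k u * aInv k v :=
  map_mul (Algebra.TensorProduct.assoc k k k H H H).symm u v

theorem aInv_one : aInv (H := H) k 1 = 1 :=
  map_one (Algebra.TensorProduct.assoc k k k H H H).symm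

theorem tmul_mem_relQ3 {w : H ⊗[k] H} (hw : w ∈ relQ k af bf) (z : H) :
    w ⊗ₜ[k] z ∈ relQ3 k af bf := by
  induction hw using Submodule.span_induction with
  | mem g hg =>
    obtain ⟨a, x, y, rfl⟩ := hg
    exact Submodule.subset_span (Or.inl ⟨a, x, y, z, sub_tmul _ _ _⟩)
  | zero => simp
  | add u v _ _ hu hv => rw [add_tmul]; exact add_mem hu hv
  | smul c u _ hu => rw [← smul_tmul']; exact Submodule.smul_mem _ c hu

theorem aInv_tmul_mem_relQ3 (x : H) {w : H ⊗[k] H} (hw : w ∈ relQ k af bf) :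
    aInv k (x ⊗ₜ[k] w) ∈ relQ3 k af bf := by
  induction hw using Submodule.span_induction with
  | mem g hg =>
    obtain ⟨a, p, q, rfl⟩ := hg
    exact Submodule.subset_span (Or.inr ⟨a, x, p, q, by simp [aInv, tmul_sub]⟩)
  | zero => simp
  | add u v _ _ hu hv => rw [tmul_add, map_add]; exact add_mem hu hv
  | smul c u _ hu => rw [tmul_smul, map_smul]; exact Submodule.smul_mem _ c hu

variable [Ring R] [Algebra k R]

theorem tmul_mul_mem_relQ3 {g : H ⊗[k] H} (hg : g ∈ relQ k af bf) (z : H)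
    (u : (H ⊗[k] H) ⊗[k] H) : (g ⊗ₜ[k] z) * u ∈ relQ3 k af bf := by
  induction u using TensorProduct.induction_on with
  | zero => simp
  | tmul p r =>
    rw [Algebra.TensorProduct.tmul_mul_tmul]
    exact tmul_mem_relQ3 (relQ_mul_right k af bf hg p) _
  | add p q hp hq => rw [mul_add]; exact add_mem hp hq

theorem aInv_tmul_mul_mem_relQ3 (x : H) {g : H ⊗[k] H} (hg : g ∈ relQ k af bf)
    (t : H ⊗[k] (H ⊗[k] H)) : aInv k (x ⊗ₜ[k] g) * aInv k t ∈ relQ3 k af bf := by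
  induction t using TensorProduct.induction_on with
  | zero => simp
  | tmul p v =>
    rw [← aInv_mul, Algebra.TensorProduct.tmul_mul_tmul]
    exact aInv_tmul_mem_relQ3 _ (relQ_mul_right k af bf hg v)
  | add p q hp hq => rw [map_add, mul_add]; exact add_mem hp hq

theorem relQ3_mul_right {w : (H ⊗[k] H) ⊗[k] H} (hw : w ∈ relQ3 k af bf)
    (u : (H ⊗[k] H) ⊗[k] H) : w * u ∈ relQ3 k af bf := by
  induction hw using Submodule.span_induction with
  | mem g hg =>
    rcases hg with ⟨a, x, y, z, rfl⟩ | ⟨a, x, y, z, rfl⟩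
    · rw [← sub_tmul]
      exact tmul_mul_mem_relQ3 (Submodule.subset_span ⟨a, x, y, rfl⟩) z u
    · have hu : u = aInv k (TensorProduct.assoc k H H H u) := by simp [aInv]
      have hgen : (x ⊗ₜ[k] (bf a * y)) ⊗ₜ[k] z - (x ⊗ₜ[k] y) ⊗ₜ[k] (af a * z)
          = aInv k (x ⊗ₜ[k] ((bf a * y) ⊗ₜ[k] z - y ⊗ₜ[k] (af a * z))) := by
        simp [aInv, tmul_sub]
      rw [hgen, hu]
      exact aInv_tmul_mul_mem_relQ3 x (Submodule.subset_span ⟨a, y, z, rfl⟩) _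
  | zero => simp
  | add w₁ w₂ _ _ h₁ h₂ => rw [add_mul]; exact add_mem h₁ h₂
  | smul c w _ hw => rw [smul_mul_assoc]; exact Submodule.smul_mem _ c hw

end RelativeTensor

section CoproductTensorId

variable {k H R : Type} [CommRing k] [Ring H] [Algebra k H] {af bf : R → H}
  {c : H →ₗ[k] H ⊗[k] H}

theorem DL_tmul (x y : H) : DL k c (x ⊗ₜ y) = c x ⊗ₜ y := rfl

theorem DR_tmul (x y : H) : DR k c (x ⊗ₜ y) = aInv k (x ⊗ₜ c y) := rfl

theorem DL_mul_sub_mem (hc : ∀ x y, prQ k af bf (c (x * y)) = prQ k af bf (c x * c y))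
    (u v : H ⊗[k] H) : DL k c (u * v) - DL k c u * DL k c v ∈ relQ3 k af bf :=
  map_mul_sub_mem_of_tmul (DL k c) (fun x y a b => by
    rw [Algebra.TensorProduct.tmul_mul_tmul, DL_tmul, DL_tmul, DL_tmul,
      Algebra.TensorProduct.tmul_mul_tmul, ← sub_tmul]
    exact tmul_mem_relQ3 ((Submodule.Quotient.eq _).mp (hc x a)) _) u v

theorem DR_mul_sub_mem (hc : ∀ x y, prQ k af bf (c (x * y)) = prQ k af bf (c x * c y))
    (u v : H ⊗[k] H) : DR k c (u * v) - DR k c u * DR k c v ∈ relQ3 k af bf :=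
  map_mul_sub_mem_of_tmul (DR k c) (fun x y a b => by
    rw [Algebra.TensorProduct.tmul_mul_tmul, DR_tmul, DR_tmul, DR_tmul, ← aInv_mul,
      Algebra.TensorProduct.tmul_mul_tmul, ← map_sub, ← tmul_sub]
    exact aInv_tmul_mem_relQ3 _ ((Submodule.Quotient.eq _).mp (hc y b))) u v

end CoproductTensorId

section ExpCocycle

variable {k H R : Type} [Field k] [CharZero k] [Ring H] [Algebra k H] [Ring R] [Algebra k R]
  {af bf : R → H} {c : H →ₗ[k] H ⊗[k] H}

theorem cocycle_coeff_exp_of_primitive (hc1 : c 1 = 1)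
    (hc : ∀ x y, prQ k af bf (c (x * y)) = prQ k af bf (c x * c y))
    {ι : Type} [Fintype ι] {A B : ι → H}
    (hA : ∀ i, c (A i) = A i ⊗ₜ[k] 1 + 1 ⊗ₜ[k] A i)
    (hB : ∀ i, c (B i) = B i ⊗ₜ[k] 1 + 1 ⊗ₜ[k] B i)
    (hAA : ∀ i j, Commute (A i) (A j)) (hBB : ∀ i j, Commute (B i) (B j))
    (hAB : ∀ i j, Commute (A i) (B j)) (n : ℕ) :
    prQ3 k af bf (∑ p ∈ antidiagonal n,
        DL k c ((p.1.factorial : k)⁻¹ • (∑ i, A i ⊗ₜ[k] B i) ^ p.1)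
          * (((p.2.factorial : k)⁻¹ • (∑ i, A i ⊗ₜ[k] B i) ^ p.2) ⊗ₜ[k] (1 : H)))
      = prQ3 k af bf (∑ p ∈ antidiagonal n,
        DR k c ((p.1.factorial : k)⁻¹ • (∑ i, A i ⊗ₜ[k] B i) ^ p.1)
          * aInv k ((1 : H) ⊗ₜ[k] ((p.2.factorial : k)⁻¹ • (∑ i, A i ⊗ₜ[k] B i) ^ p.2))) := by
  set θ := ∑ i, A i ⊗ₜ[k] B i
  -- `θ¹²`, `θ²³` and `θ¹³`
  set U : (H ⊗[k] H) ⊗[k] H := ∑ i, (A i ⊗ₜ[k] B i) ⊗ₜ[k] 1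
  set V : (H ⊗[k] H) ⊗[k] H := ∑ i, (1 ⊗ₜ[k] A i) ⊗ₜ[k] B i
  set W : (H ⊗[k] H) ⊗[k] H := ∑ i, (A i ⊗ₜ[k] 1) ⊗ₜ[k] B i
  let gL : H ⊗[k] H →ₐ[k] (H ⊗[k] H) ⊗[k] H := Algebra.TensorProduct.includeLeft
  let gR : H ⊗[k] H →ₐ[k] (H ⊗[k] H) ⊗[k] H :=
    (Algebra.TensorProduct.assoc k k k H H H).symm.toAlgHom.comp
      Algebra.TensorProduct.includeRight
  have hU : gL θ = U := sum_tmul _ _ _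
  have hV : gR θ = V := by simp [gR, θ, V]
  have hDL : DL k c θ = W + V := by
    simp [θ, W, V, DL_tmul, hA, add_tmul, sum_add_distrib]
  have hDR : DR k c θ = U + W := by
    simp [θ, U, W, DR_tmul, hB, tmul_add, aInv, sum_add_distrib]
  have hUV : Commute U V := Commute.sum_left _ _ _ fun i _ => Commute.sum_right _ _ _ fun j _ =>
    ((Commute.one_right _).tmul (hAB j i).symm).tmul (Commute.one_left _)
  have hUW : Commute U W := Commute.sum_left _ _ _ fun i _ => Commute.sum_right _ _ _ fun j _ =>
    ((hAA i j).tmul (Commute.one_right _)).tmul (Commute.one_left _)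
  have hVW : Commute V W := Commute.sum_left _ _ _ fun i _ => Commute.sum_right _ _ _ fun j _ =>
    ((Commute.one_left _).tmul (Commute.one_right _)).tmul (hBB i j)
  have hI : ∀ w ∈ relQ3 k af bf, ∀ u, w * u ∈ relQ3 k af bf := fun _ hw u =>
    relQ3_mul_right hw u
  have hDL1 : DL k c 1 = 1 := by
    rw [Algebra.TensorProduct.one_def, DL_tmul, hc1]
    rfl
  have hDR1 : DR k c 1 = 1 := by
    rw [Algebra.TensorProduct.one_def, DR_tmul, hc1, ← Algebra.TensorProduct.one_def, aInv_one]
  have hL := sum_antidiagonal_map_mul_sub_mem hI (DL k c) gL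
    (map_pow_sub_pow_mem hI hDL1 fun u => DL_mul_sub_mem hc u θ)
    (by rw [hDL, hU]; exact (hUW.symm.add_left hUV.symm)) n
  have hR := sum_antidiagonal_map_mul_sub_mem hI (DR k c) gR
    (map_pow_sub_pow_mem hI hDR1 fun u => DR_mul_sub_mem hc u θ)
    (by rw [hDR, hV]; exact hUV.add_left hVW.symm) n
  have hsum : DL k c θ + gL θ = DR k c θ + gR θ := by
    rw [hDL, hDR, hU, hV]; abel
  rw [hsum] at hL
  have hdiff := sub_mem hL hR
  rw [sub_sub_sub_cancel_right] at hdiff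
  exact (Submodule.Quotient.eq _).mpr hdiff

end ExpCocycle

section Counit

variable {k H R : Type} [CommRing k] [Ring H] [Algebra k H] [Ring R] [Algebra k R]
  {s : R →ₗ[k] H} {ε : H →ₗ[k] R}

theorem e1_tmul (x y : H) : e1 k s ε (x ⊗ₜ y) = s (ε x) * y := rfl

theorem e2_tmul (x y : H) : e2 k s ε (x ⊗ₜ y) = s (ε y) * x := rfl

theorem e1_one (hs : s 1 = 1) (hε : ε 1 = 1) : e1 k s ε 1 = 1 := by
  rw [Algebra.TensorProduct.one_def, e1_tmul, hε, hs, one_mul]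

theorem e2_one (hs : s 1 = 1) (hε : ε 1 = 1) : e2 k s ε 1 = 1 := by
  rw [Algebra.TensorProduct.one_def, e2_tmul, hε, hs, one_mul]

theorem e1_mul_tmul_eq_zero {a : H} (ha : ∀ x, ε (x * a) = 0) (b : H) (u : H ⊗[k] H) :
    e1 k s ε (u * (a ⊗ₜ b)) = 0 := by
  induction u using TensorProduct.induction_on with
  | zero => simp
  | tmul x y => rw [Algebra.TensorProduct.tmul_mul_tmul, e1_tmul, ha, map_zero, zero_mul]
  | add u v hu hv => rw [add_mul, map_add, hu, hv, add_zero]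

theorem e2_mul_tmul_eq_zero {b : H} (hb : ∀ y, ε (y * b) = 0) (a : H) (u : H ⊗[k] H) :
    e2 k s ε (u * (a ⊗ₜ b)) = 0 := by
  induction u using TensorProduct.induction_on with
  | zero => simp
  | tmul x y => rw [Algebra.TensorProduct.tmul_mul_tmul, e2_tmul, hb, map_zero, zero_mul]
  | add u v hu hv => rw [add_mul, map_add, hu, hv, add_zero]

end Counit

theorem map_inv_factorial_smul_pow_of_map_mul_eq_zero {k A B : Type} [Field k] [Ring A]
    [Algebra k A] [Ring B] [Module k B] {L : A →ₗ[k] B} (h1 : L 1 = 1) {θ : A}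
    (hθ : ∀ u, L (u * θ) = 0) (n : ℕ) :
    L ((n.factorial : k)⁻¹ • θ ^ n) = if n = 0 then 1 else 0 := by
  cases n with
  | zero => simp [h1]
  | succ n => rw [pow_succ, map_smul, hθ, smul_zero, if_neg n.succ_ne_zero]

section TensorHopfAlgebroid

variable {k R D G : Type} [Field k] [CommRing R] [Algebra k R] [Ring D] [Algebra k D]
  [Ring G] [Bialgebra k G] {Δ'D : D →ₗ[k] D ⊗[k] D} {μD : D →ₐ[k] Module.End k R}

theorem copH_one (hΔ1 : Δ'D 1 = 1) : copH (G := G) k Δ'D 1 = 1 := by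
  simp [copH, Algebra.TensorProduct.one_def, hΔ1]

theorem copH_tmul_one_of_primitive {x : D} (hx : Δ'D x = x ⊗ₜ 1 + 1 ⊗ₜ x) :
    copH k Δ'D (x ⊗ₜ[k] (1 : G)) = (x ⊗ₜ[k] 1) ⊗ₜ[k] 1 + 1 ⊗ₜ[k] (x ⊗ₜ[k] 1) := by
  simp [copH, hx, add_tmul, Algebra.TensorProduct.one_def]

theorem copH_one_tmul_of_primitive (hΔ1 : Δ'D 1 = 1) {u : G}
    (hu : Coalgebra.comul (R := k) u = u ⊗ₜ 1 + 1 ⊗ₜ u) :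
    copH k Δ'D ((1 : D) ⊗ₜ[k] u) = (1 ⊗ₜ[k] u) ⊗ₜ[k] 1 + 1 ⊗ₜ[k] (1 ⊗ₜ[k] u) := by
  simp [copH, hu, hΔ1, tmul_add, Algebra.TensorProduct.one_def]

theorem couH_tmul (x : D) (u : G) :
    couH k μD (x ⊗ₜ u) = Coalgebra.counit (R := k) u • μD x 1 := rfl

theorem couH_one : couH (G := G) k μD 1 = 1 := by
  simp [Algebra.TensorProduct.one_def, couH_tmul]

theorem couH_mul_tmul_one_eq_zero {x : D} (hx : μD x 1 = 0) (y : D ⊗[k] G) :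
    couH k μD (y * (x ⊗ₜ 1)) = 0 := by
  induction y using TensorProduct.induction_on with
  | zero => simp
  | tmul p u => simp [couH_tmul, hx]
  | add p q hp hq => rw [add_mul, map_add, hp, hq, add_zero]

theorem couH_mul_one_tmul_eq_zero {u : G} (hu : Coalgebra.counit (R := k) u = 0)
    (y : D ⊗[k] G) : couH k μD (y * (1 ⊗ₜ u)) = 0 := by
  induction y using TensorProduct.induction_on with
  | zero => simp
  | tmul p v => simp [couH_tmul, Bialgebra.counit_mul, hu]
  | add p q hp hq => rw [add_mul, map_add, hp, hq, add_zero]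

end TensorHopfAlgebroid

/-- Lemma 7.1.  Let `η` be a finite-dimensional abelian Lie
algebra with basis `h₁, …, h_N`, and let `H = D ⊗ U_ℏ𝔤` be the Hopf algebroid over
`R = M(η*)[[ℏ]]` (axiomatized: `D` the algebra of meromorphic differential
operators on `η*` with source `αD`, anchor `μD` and coproduct lift `Δ'D`; `G = U_ℏ𝔤`
a bialgebra; the `hᵢ ∈ G` primitive, commuting, with `ε₀(hᵢ) = 0`; the
`∂/∂λᵢ = dᵢ ∈ D` primitive, commuting, with `dᵢ(1) = 0`).  Set
`θ = Σᵢ (∂/∂λᵢ ⊗ hᵢ)` and `Θ = exp(ℏθ)` (the series `Θₙ = θⁿ/n!`).  Then `Θ`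
satisfies the twistor cocycle identity
`((Δ ⊗_R id)Θ)Θ¹² = ((id ⊗_R Δ)Θ)Θ²³` and the counit identities
`(ε ⊗_R id)Θ = (id ⊗_R ε)Θ = 1`, order by order in `ℏ`. -/
theorem statement14
    (k R D G : Type) [Field k] [CharZero k] [CommRing R] [Algebra k R]
    [Ring D] [Algebra k D] [Ring G] [Bialgebra k G]
    (αD : R →ₐ[k] D) (μD : D →ₐ[k] Module.End k R)
    (Δ'D : D →ₗ[k] D ⊗[k] D)
    (N : ℕ) (d : Fin N → D) (h : Fin N → G)
    -- the `hᵢ` span an abelian subalgebra of primitive elements with `ε₀(hᵢ) = 0`: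
    (hprim_h : ∀ i, Coalgebra.comul (R := k) (h i)
      = h i ⊗ₜ[k] (1 : G) + (1 : G) ⊗ₜ[k] h i)
    (hcou_h : ∀ i, Coalgebra.counit (R := k) (h i) = (0 : k))
    (hcomm_h : ∀ i j, h i * h j = h j * h i)
    -- the coordinate derivations `dᵢ = ∂/∂λᵢ` are primitive, commute, kill `1`:
    (hprim_d : ∀ i, Δ'D (d i) = d i ⊗ₜ[k] (1 : D) + (1 : D) ⊗ₜ[k] d i)
    (hd1 : ∀ i, μD (d i) 1 = 0)
    (hcomm_d : ∀ i j, d i * d j = d j * d i)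
    -- `Δ'D` lifts a coproduct with `Δ(1) = 1 ⊗ 1`:
    (hΔ1 : Δ'D 1 = 1)
    -- the coproduct of `H` is multiplicative modulo the relations:
    (hmulH : ∀ x y : D ⊗[k] G,
      prQ k (fun a => srcH k G αD a) (fun a => srcH k G αD a) (copH k Δ'D (x * y))
        = prQ k (fun a => srcH k G αD a) (fun a => srcH k G αD a)
            (copH k Δ'D x * copH k Δ'D y)) :
    -- cocycle identity, order by order in `ℏ`:
    ((∀ n : ℕ,
      prQ3 k (fun a => srcH k G αD a) (fun a => srcH k G αD a)
        (∑ p ∈ antidiagonal n,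
          DL k (copH k Δ'D) (ThetaH k d h p.1) * (ThetaH k d h p.2 ⊗ₜ[k] (1 : D ⊗[k] G)))
      = prQ3 k (fun a => srcH k G αD a) (fun a => srcH k G αD a)
        (∑ p ∈ antidiagonal n,
          DR k (copH k Δ'D) (ThetaH k d h p.1)
            * aInv k ((1 : D ⊗[k] G) ⊗ₜ[k] ThetaH k d h p.2)))
    -- counit identities, order by order in `ℏ`:
    ∧ (∀ n : ℕ,
        e1 k (srcH k G αD).toLinearMap (couH k μD) (ThetaH k d h n)
          = (if n = 0 then (1 : D ⊗[k] G) else 0)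
        ∧ e2 k (srcH k G αD).toLinearMap (couH k μD) (ThetaH k d h n)
          = (if n = 0 then (1 : D ⊗[k] G) else 0))) := by
  have hA := fun i => copH_tmul_one_of_primitive (G := G) (hprim_d i)
  have hB := fun i => copH_one_tmul_of_primitive hΔ1 (hprim_h i)
  have hs : (srcH k G αD).toLinearMap 1 = 1 := map_one (srcH k G αD)
  refine ⟨cocycle_coeff_exp_of_primitive (copH_one hΔ1) hmulH hA hB
    (fun i j => Commute.tmul (hcomm_d i j) (Commute.refl 1))
    (fun i j => (Commute.refl 1).tmul (hcomm_h i j : Commute _ _))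
    (fun i j => (Commute.one_right _).tmul (Commute.one_left _)), fun n => ⟨?_, ?_⟩⟩
  · refine map_inv_factorial_smul_pow_of_map_mul_eq_zero (e1_one hs couH_one) (fun u => ?_) n
    rw [thetaH, mul_sum, map_sum]
    exact sum_eq_zero fun i _ => e1_mul_tmul_eq_zero (couH_mul_tmul_one_eq_zero (hd1 i)) _ u
  · refine map_inv_factorial_smul_pow_of_map_mul_eq_zero (e2_one hs couH_one) (fun u => ?_) n
    rw [thetaH, mul_sum, map_sum]
    exact sum_eq_zero fun i _ => e2_mul_tmul_eq_zero (couH_mul_one_tmul_eq_zero (hcou_h i)) _ u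
end
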